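/- arXiv:1006.4501 — 3 statements merged into one kernel-verified Lean document; each statement's English description precedes it below -/
import Mathlib

section
/- Let G = (V,E) be a finite simple graph with m = 3s+1 edges. Then G has an edge irregular total (s+1)-weighting ŵ : V ∪ E → {1,2,…,s+1} if and only if G has a well guarded weighting w : V → {0,1,…,s}. -/
open SimpleGraph

/-- `IsEdgeIrregularTotalWeighting G s wv we` : the combined weighting given by `wv` on
vertices and `we` on edges is an edge irregular total `s`-weighting of `G`. -/
def IsEdgeIrregularTotalWeighting {V : Type*} (G : SimpleGraph V) (s : ℕ)
    (wv : V → ℕ) (we : Sym2 V → ℕ) : Prop :=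
  (∀ v, 1 ≤ wv v ∧ wv v ≤ s) ∧
  (∀ e ∈ G.edgeSet, 1 ≤ we e ∧ we e ≤ s) ∧
  ∀ u v u' v', G.Adj u v → G.Adj u' v' → s(u, v) ≠ s(u', v') →
    we s(u, v) + wv u + wv v ≠ we s(u', v') + wv u' + wv v'

/-- The weight of an edge induced by a vertex weighting `w` : for `e = xy`,
`edgeWt w e = w x + w y`. -/
def edgeWt {V : Type*} (w : V → ℕ) : Sym2 V → ℕ :=
  Sym2.lift ⟨fun x y => w x + w y, fun _ _ => Nat.add_comm _ _⟩

/-- A vertex weighting `w` of a graph `G` with `3s+1` edges is *well guarded* if for every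
`0 ≤ i ≤ 2s` we have `i + 1 ≤ |{e ∈ E : w(e) ≤ i}| ≤ i + s + 1`. -/
def WellGuarded {V : Type*} (G : SimpleGraph V) (s : ℕ) (w : V → ℕ) : Prop :=
  ∀ i ≤ 2 * s,
    i + 1 ≤ {e ∈ G.edgeSet | edgeWt w e ≤ i}.ncard ∧
    {e ∈ G.edgeSet | edgeWt w e ≤ i}.ncard ≤ i + s + 1

/-!
Lowering every vertex weight by 1 and every total edge weight by 3 turns an edge irregular total
`(s+1)`-weighting into a vertex weighting `w ≤ s` with an injective ranking `r` of the `3s+1`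
edges into `{0, …, 3s}` such that `w(e) ≤ r(e) ≤ w(e) + s`; conversely such a ranking is realised
by the edge weights `r(e) + 1 - w(e)`. These rankings exist exactly for well guarded `w`: the ranks
of the edges with `w(e) ≤ i` cover `{0, …, i}` and lie in `{0, …, i + s}`, and conversely the
counting bounds say that listing the edges by increasing `w(e)` is such a ranking.
-/

open Finset

lemma Set.ncard_sep_eq_card_filter {α : Type*} (s : Set α) [Fintype s] (p : α → Prop)
    [DecidablePred p] : {a ∈ s | p a}.ncard = #{a : s | p a} := by
  rw [← Fintype.card_subtype, ← Nat.card_eq_fintype_card, ← _root_.Nat.card_coe_set_eq]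
  exact Nat.card_congr (Equiv.subtypeSubtypeEquivSubtypeInter (· ∈ s) p).symm

section Ranking

variable {ι : Type*} [Fintype ι] {f r : ι → ℕ} {s : ℕ}

lemma le_card_filter_le_of_injective (hinj : Function.Injective r)
    (hlt : ∀ e, r e < Fintype.card ι) (hr : ∀ e, f e ≤ r e) {i : ℕ}
    (hi : i < Fintype.card ι) : i + 1 ≤ #{e | f e ≤ i} := by
  have himage : univ.image r = range (Fintype.card ι) :=
    eq_of_subset_of_card_le (image_subset_iff.2 fun e _ => mem_range.2 (hlt e))
      (by rw [card_image_of_injective _ hinj, card_range, card_univ])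
  have hsub : range (i + 1) ⊆ image r {e | f e ≤ i} := by
    intro j hj
    rw [mem_range] at hj
    obtain ⟨e, -, rfl⟩ := mem_image.1 (himage ▸ mem_range.2 (by omega) : j ∈ univ.image r)
    exact mem_image_of_mem r (mem_filter.2 ⟨mem_univ e, by have := hr e; omega⟩)
  simpa using (card_le_card hsub).trans card_image_le

lemma card_filter_le_le_of_injective (hinj : Function.Injective r)
    (hr : ∀ e, r e ≤ f e + s) (i : ℕ) : #{e | f e ≤ i} ≤ i + s + 1 :=
  calc #{e | f e ≤ i} ≤ #(range (i + s + 1)) :=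
        card_le_card_of_injOn r (fun e he => by
          have := hr e
          have := (mem_filter.1 he).2
          simp only [coe_range, Set.mem_Iio]
          omega) hinj.injOn
    _ = i + s + 1 := card_range _

lemma exists_equivFin_strictMono (f : ι → ℕ) :
    ∃ r : ι ≃ Fin (Fintype.card ι), ∀ a b, f a < f b → r a < r b := by
  set g := f ∘ (Fintype.equivFin ι).symm
  refine ⟨(Fintype.equivFin ι).trans (Tuple.sort g).symm, fun a b hab => ?_⟩
  by_contra! h
  have := Tuple.monotone_sort g h
  simp only [Function.comp_apply, Equiv.trans_apply, Equiv.apply_symm_apply,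
    Equiv.symm_apply_apply, g] at this
  omega

lemma card_filter_lt_equivFin {n : ℕ} (r : ι ≃ Fin n) (k : Fin n) : #{e | r e < k} = k := by
  rw [← Fin.card_Iio k]
  exact card_equiv r (by simp)

lemma card_filter_le_equivFin {n : ℕ} (r : ι ≃ Fin n) (k : Fin n) :
    #{e | r e ≤ k} = k + 1 := by
  rw [← Fin.card_Iic k]
  exact card_equiv r (by simp)

lemma card_filter_lt_le_equivFin {n : ℕ} {r : ι ≃ Fin n}
    (hr : ∀ a b, f a < f b → r a < r b) (a : ι) : #{e | f e < f a} ≤ r a := by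
  rw [← card_filter_lt_equivFin r (r a)]
  exact card_le_card (monotone_filter_right _ fun e _ => hr e a)

lemma equivFin_lt_card_filter_le {n : ℕ} {r : ι ≃ Fin n}
    (hr : ∀ a b, f a < f b → r a < r b) (a : ι) : r a < #{e | f e ≤ f a} := by
  rw [Nat.lt_iff_add_one_le, ← card_filter_le_equivFin r (r a)]
  refine card_le_card (monotone_filter_right _ fun e _ he => ?_)
  by_contra! h
  exact (hr a e h).not_ge he

lemma exists_injective_le_le_of_card_filter
    (hlow : ∀ a, f a ≤ #{e | f e < f a}) (hup : ∀ a, #{e | f e ≤ f a} ≤ f a + s + 1) :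
    ∃ r : ι → ℕ, Function.Injective r ∧ ∀ e, f e ≤ r e ∧ r e ≤ f e + s := by
  obtain ⟨r, hr⟩ := exists_equivFin_strictMono f
  refine ⟨fun e => r e, Fin.val_injective.comp r.injective, fun e => ⟨?_, ?_⟩⟩
  · exact (hlow e).trans (card_filter_lt_le_equivFin hr e)
  · have := equivFin_lt_card_filter_le hr e
    have := hup e
    dsimp only
    omega

end Ranking

section Weightings

variable {V : Type*} {G : SimpleGraph V} {s : ℕ} {w wv : V → ℕ} {we : Sym2 V → ℕ}

@[simp]
lemma edgeWt_mk (w : V → ℕ) (u v : V) : edgeWt w s(u, v) = w u + w v := rfl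

lemma edgeWt_le (hw : ∀ v, w v ≤ s) (e : Sym2 V) : edgeWt w e ≤ 2 * s := by
  induction e using Sym2.ind with
  | _ u v => have := hw u; have := hw v; simp only [edgeWt_mk]; omega

lemma edgeWt_sub_one_add_two (hw : ∀ v, 1 ≤ w v) (e : Sym2 V) :
    edgeWt (fun v => w v - 1) e + 2 = edgeWt w e := by
  induction e using Sym2.ind with
  | _ u v => have := hw u; have := hw v; simp only [edgeWt_mk]; omega

lemma IsEdgeIrregularTotalWeighting.injective (h : IsEdgeIrregularTotalWeighting G s wv we) :
    Function.Injective fun e : G.edgeSet => we e + edgeWt wv e := by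
  rintro ⟨e, he⟩ ⟨e', he'⟩ heq
  by_contra hne
  induction e using Sym2.ind with | _ u v =>
  induction e' using Sym2.ind with | _ u' v' =>
  exact h.2.2 u v u' v' he he' (fun h => hne (Subtype.ext h)) (by simpa [add_assoc] using heq)

lemma IsEdgeIrregularTotalWeighting.exists_injective_le_le
    (h : IsEdgeIrregularTotalWeighting G (s + 1) wv we) :
    ∃ r : G.edgeSet → ℕ, Function.Injective r ∧ ∀ e : G.edgeSet,
      edgeWt (fun v => wv v - 1) e ≤ r e ∧ r e ≤ edgeWt (fun v => wv v - 1) e + s := by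
  have hwv : ∀ v, 1 ≤ wv v := fun v => (h.1 v).1
  refine ⟨fun e => edgeWt (fun v => wv v - 1) e + (we e - 1), fun e e' hee' => h.injective ?_,
    fun e => ⟨Nat.le_add_right _ _, by have := (h.2.1 e e.2).2; dsimp only; omega⟩⟩
  have := edgeWt_sub_one_add_two hwv e; have := edgeWt_sub_one_add_two hwv e'
  have := (h.2.1 e e.2).1; have := (h.2.1 e' e'.2).1
  dsimp only at hee' ⊢
  omega

lemma exists_isEdgeIrregularTotalWeighting_of_injective (hw : ∀ v, w v ≤ s)
    {r : G.edgeSet → ℕ} (hinj : Function.Injective r)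
    (hr : ∀ e : G.edgeSet, edgeWt w e ≤ r e ∧ r e ≤ edgeWt w e + s) :
    ∃ we, IsEdgeIrregularTotalWeighting G (s + 1) (fun v => w v + 1) we := by
  classical
  refine ⟨fun e => if he : e ∈ G.edgeSet then r ⟨e, he⟩ + 1 - edgeWt w e else 0,
    fun v => ⟨Nat.le_add_left 1 (w v), Nat.add_le_add_right (hw v) 1⟩, fun e he => ?_, ?_⟩
  · have := hr ⟨e, he⟩
    simp only [he, dite_true]
    dsimp only at this
    omega
  · intro u v u' v' huv huv' hne heq
    have h1 := hr ⟨s(u, v), huv⟩; have h2 := hr ⟨s(u', v'), huv'⟩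
    simp only [mem_edgeSet, huv, huv', dite_true, edgeWt_mk] at heq h1 h2
    exact hne (congrArg Subtype.val (@hinj ⟨s(u, v), huv⟩ ⟨s(u', v'), huv'⟩ (by omega)))

lemma wellGuarded_of_injective (hw : ∀ v, w v ≤ s) (hm : G.edgeSet.ncard = 3 * s + 1)
    {r : G.edgeSet → ℕ} (hinj : Function.Injective r)
    (hr : ∀ e : G.edgeSet, edgeWt w e ≤ r e ∧ r e ≤ edgeWt w e + s) : WellGuarded G s w := by
  have := (Set.finite_of_ncard_pos (by omega : 0 < G.edgeSet.ncard)).fintype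
  classical
  have hcard : Fintype.card G.edgeSet = 3 * s + 1 := by
    rw [← Nat.card_eq_fintype_card, Nat.card_coe_set_eq, hm]
  intro i hi
  rw [Set.ncard_sep_eq_card_filter]
  refine ⟨le_card_filter_le_of_injective hinj (fun e => ?_) (fun e => (hr e).1) (by omega),
    card_filter_le_le_of_injective hinj (fun e => (hr e).2) i⟩
  have := edgeWt_le hw e
  have := (hr e).2
  omega

lemma exists_injective_of_wellGuarded (hw : ∀ v, w v ≤ s) (hfin : G.edgeSet.Finite)
    (hwg : WellGuarded G s w) : ∃ r : G.edgeSet → ℕ, Function.Injective r ∧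
      ∀ e : G.edgeSet, edgeWt w e ≤ r e ∧ r e ≤ edgeWt w e + s := by
  have := hfin.fintype
  classical
  refine exists_injective_le_le_of_card_filter (fun a => ?_) (fun a => ?_)
  · rcases Nat.eq_zero_or_pos (edgeWt w a) with h0 | hpos
    · exact h0 ▸ Nat.zero_le _
    have := (hwg (edgeWt w a - 1) (by have := edgeWt_le hw a; omega)).1
    rw [Set.ncard_sep_eq_card_filter] at this
    simp only [Nat.le_sub_one_iff_lt hpos] at this
    omega
  · have := (hwg (edgeWt w a) (edgeWt_le hw a)).2
    rwa [Set.ncard_sep_eq_card_filter] at this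

end Weightings

theorem edgeIrregular_iff_wellGuarded_general {V : Type*}
    (G : SimpleGraph V) (s : ℕ) (hm : G.edgeSet.ncard = 3 * s + 1) :
    (∃ (wv : V → ℕ) (we : Sym2 V → ℕ), IsEdgeIrregularTotalWeighting G (s + 1) wv we) ↔
      (∃ w : V → ℕ, (∀ v, w v ≤ s) ∧ WellGuarded G s w) := by
  constructor
  · rintro ⟨wv, we, h⟩
    obtain ⟨r, hinj, hr⟩ := h.exists_injective_le_le
    exact ⟨fun v => wv v - 1, fun v => Nat.sub_le_of_le_add (h.1 v).2,
      wellGuarded_of_injective (fun v => Nat.sub_le_of_le_add (h.1 v).2) hm hinj hr⟩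
  · rintro ⟨w, hw, hwg⟩
    have hfin := Set.finite_of_ncard_pos (by omega : 0 < G.edgeSet.ncard)
    obtain ⟨r, hinj, hr⟩ := exists_injective_of_wellGuarded hw hfin hwg
    exact ⟨_, exists_isEdgeIrregularTotalWeighting_of_injective hw hinj hr⟩

/-- A finite simple graph with `m = 3s+1` edges has an edge irregular total
`(s+1)`-weighting if and only if it has a well guarded weighting `w : V → {0, 1, …, s}`. -/
theorem edgeIrregular_iff_wellGuarded {V : Type*} [Fintype V] [DecidableEq V]
    (G : SimpleGraph V) (s : ℕ) (hm : G.edgeSet.ncard = 3 * s + 1) :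
    (∃ (wv : V → ℕ) (we : Sym2 V → ℕ), IsEdgeIrregularTotalWeighting G (s + 1) wv we) ↔
      (∃ w : V → ℕ, (∀ v, w v ≤ s) ∧ WellGuarded G s w) :=
  edgeIrregular_iff_wellGuarded_general G s hm
end

section
/- Let G = (V,E) be a finite simple graph with m := |E| ≥ 7·10^10 edges and m ≡ 1 (mod 3); set s := (m−1)/3, ε := 2.7·10⁻⁵, B := {v ∈ V : d(v) > εm} and V' := V ∖ B. Suppose the maximum degree Δ satisfies 0.51·m < Δ ≤ 2s, a vertex v1 has d(v1) = Δ, and every vertex other than v1 is adjacent to v1 (i.e. V = {v1} ∪ N(v1)). Then there exists a set X ⊆ V' with |X| ≥ s+1 and |E(X)| ≤ 2s − Δ + 1. -/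
/-! Fewer than `2 / ε < 74075` vertices have degree above `εm`, so `V' = Bᶜ` has at least
`Δ + 1 - 74074` vertices. It spans at most `m - Δ - 2(|B| - 1)` edges: the `Δ` edges at `v1` are
missing, and when `B` has a second vertex, so are its more than `εm > 2|B|` edges.
Now delete vertices of maximum degree one at a time. From a set of `n` vertices spanning `e`
edges, such a deletion removes at least the average degree `2e/n` of edges: at least two while `2e > n + 1`, and at least one while any edge is left.
Counting the `|V'| - s - 1` deletions leaves `s + 1` vertices spanning at most `2s - Δ + 1`
edges. -/

open SimpleGraph

/-- `E(X)` : the set of edges of `G` with both endpoints in `X`. -/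
def edgesWithin {V : Type*} (G : SimpleGraph V) (X : Set V) : Set (Sym2 V) :=
  {e ∈ G.edgeSet | ∀ v ∈ e, v ∈ X}

open Finset

namespace SimpleGraph

variable {V : Type*} [Fintype V] (G : SimpleGraph V) [DecidableRel G.Adj]

theorem card_filter_lt_degree_mul_le (c : ℝ) :
    (#{v | c < (G.degree v : ℝ)} : ℝ) * c ≤ 2 * #G.edgeFinset := calc
  (#{v | c < (G.degree v : ℝ)} : ℝ) * c = ∑ v with c < (G.degree v : ℝ), c := by
    rw [sum_const, nsmul_eq_mul]
  _ ≤ ∑ v with c < (G.degree v : ℝ), (G.degree v : ℝ) :=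
    sum_le_sum fun v hv => (mem_filter.mp hv).2.le
  _ ≤ ∑ v, (G.degree v : ℝ) :=
    sum_le_sum_of_subset_of_nonneg (subset_univ _) fun _ _ _ => by positivity
  _ = 2 * #G.edgeFinset := by exact_mod_cast G.sum_degrees_eq_twice_card_edges

theorem card_filter_lt_degree_le {c : ℝ} {N : ℕ} (h : 2 * #G.edgeFinset < (N + 1) * c) :
    #{v | c < (G.degree v : ℝ)} ≤ N := by
  by_contra! hN
  have hN' : (N + 1 : ℝ) ≤ #{v | c < (G.degree v : ℝ)} := by exact_mod_cast hN
  have hc : 0 < c := pos_of_mul_pos_right (h.trans_le' (by positivity)) (by positivity)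
  nlinarith [G.card_filter_lt_degree_mul_le c]

section

variable [DecidableEq V]

theorem sum_card_neighborFinset_inter_eq_twice_card_edgeFinset_inter_sym2 (S : Finset V) :
    ∑ v ∈ S, #(G.neighborFinset v ∩ S) = 2 * #(G.edgeFinset ∩ S.sym2) := by
  rw [← filter_edgeFinset_toFinset_subset, card_filter_edgeFinset_toFinset_subset,
    ← sum_degrees_eq_twice_card_edges, ← sum_coe_sort S]
  refine Fintype.sum_congr _ _ fun v => ?_
  rw [← card_neighborFinset_eq_degree, ← card_map (.subtype _)]
  congr 1
  ext; simp

theorem exists_mem_twice_card_edgeFinset_inter_sym2_le {S : Finset V} (hS : S.Nonempty) :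
    ∃ v ∈ S, 2 * #(G.edgeFinset ∩ S.sym2) ≤ #S * #(G.neighborFinset v ∩ S) := by
  obtain ⟨v, hv, hmax⟩ := S.exists_max_image (fun v => #(G.neighborFinset v ∩ S)) hS
  refine ⟨v, hv, ?_⟩
  rw [← sum_card_neighborFinset_inter_eq_twice_card_edgeFinset_inter_sym2, ← smul_eq_mul]
  exact sum_le_card_nsmul _ _ _ hmax

theorem card_edgeFinset_inter_sym2_erase_add {S : Finset V} {v : V} (hv : v ∈ S) :
    #(G.edgeFinset ∩ (S.erase v).sym2) + #(G.neighborFinset v ∩ S) =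
      #(G.edgeFinset ∩ S.sym2) := by
  have h_avoid : {e ∈ G.edgeFinset ∩ S.sym2 | v ∉ e} = G.edgeFinset ∩ (S.erase v).sym2 := by
    ext e
    induction e using Sym2.ind with
    | _ a b => simp only [mem_filter, mem_inter, mem_sym2_iff, mem_erase, Sym2.mem_iff]; aesop
  have h_meet : #{e ∈ G.edgeFinset ∩ S.sym2 | ¬v ∉ e} = #(G.neighborFinset v ∩ S) := by
    refine (card_nbij (fun u => s(v, u)) ?_ ?_ ?_).symm
    · intro u hu
      simp only [coe_inter, Set.mem_inter_iff, mem_coe, mem_neighborFinset] at hu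
      simpa [mem_sym2_iff, hv] using hu
    · intro u _ w _ h
      exact Sym2.congr_right.mp h
    · intro e he
      simp only [coe_filter, mem_inter, mem_edgeFinset, mem_sym2_iff, not_not,
        Set.mem_ofPred_eq] at he
      obtain ⟨⟨he, hS⟩, hve⟩ := he
      refine ⟨Sym2.Mem.other hve, ?_, Sym2.other_spec hve⟩
      simp only [coe_inter, Set.mem_inter_iff, mem_coe, mem_neighborFinset]
      refine ⟨?_, hS _ (Sym2.other_mem hve)⟩
      rwa [← mem_edgeSet, Sym2.other_spec hve]
  rw [← card_filter_add_card_filter_not (s := G.edgeFinset ∩ S.sym2) (v ∉ ·), h_avoid, h_meet]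

theorem exists_sparse_subset_of_add_le {S : Finset V} {k T : ℕ} (hk : k ≤ #S)
    (h : #(G.edgeFinset ∩ S.sym2) + k ≤ T + #S) :
    ∃ X ⊆ S, #X = k ∧ #(G.edgeFinset ∩ X.sym2) ≤ T := by
  obtain ⟨n, hn⟩ := Nat.exists_eq_add_of_le hk
  induction n generalizing S with
  | zero => exact ⟨S, Subset.rfl, by omega, by omega⟩
  | succ n ih =>
    obtain ⟨v, hv, hmax⟩ := G.exists_mem_twice_card_edgeFinset_inter_sym2_le (S := S)
      (card_pos.mp (by omega))
    have h_erase := G.card_edgeFinset_inter_sym2_erase_add hv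
    have h_card := card_erase_of_mem hv
    have h_deg : #(G.edgeFinset ∩ S.sym2) = 0 ∨ 1 ≤ #(G.neighborFinset v ∩ S) := by
      rcases Nat.eq_zero_or_pos #(G.neighborFinset v ∩ S) with h0 | h0
      · left
        rw [h0, mul_zero] at hmax
        omega
      · exact Or.inr h0
    obtain ⟨X, hXS, hX⟩ := ih (S := S.erase v) (by omega) (by omega) (by omega)
    exact ⟨X, hXS.trans (erase_subset v S), hX⟩

/-- Deleting a vertex of degree at least two preserves `h`; once the `n` vertices of `S` span
`e ≤ (n + 1) / 2` edges, `h` implies the hypothesis of `exists_sparse_subset_of_add_le`. -/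
theorem exists_sparse_subset_of_add_three_mul_le {S : Finset V} {k T : ℕ}
    (hT : 2 * T + 1 ≤ k) (hk : k ≤ #S)
    (h : #(G.edgeFinset ∩ S.sym2) + 3 * k ≤ 2 * #S + 3 * T + 1) :
    ∃ X ⊆ S, #X = k ∧ #(G.edgeFinset ∩ X.sym2) ≤ T := by
  obtain ⟨n, hn⟩ := Nat.exists_eq_add_of_le hk
  induction n generalizing S with
  | zero => exact G.exists_sparse_subset_of_add_le hk (by omega)
  | succ n ih =>
    rcases le_or_gt (2 * #(G.edgeFinset ∩ S.sym2)) (#S + 1) with h_sparse | h_dense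
    · exact G.exists_sparse_subset_of_add_le hk (by omega)
    obtain ⟨v, hv, hmax⟩ := G.exists_mem_twice_card_edgeFinset_inter_sym2_le (S := S)
      (card_pos.mp (by omega))
    have h_erase := G.card_edgeFinset_inter_sym2_erase_add hv
    have h_card := card_erase_of_mem hv
    have h_deg : 2 ≤ #(G.neighborFinset v ∩ S) := by
      by_contra! h_deg
      nlinarith
    obtain ⟨X, hXS, hX⟩ := ih (S := S.erase v) (by omega) (by omega) (by omega)
    exact ⟨X, hXS.trans (erase_subset v S), hX⟩

theorem card_edgeFinset_inter_sym2_add_degree_le {S : Finset V} {u : V} (hu : u ∉ S) :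
    #(G.edgeFinset ∩ S.sym2) + G.degree u ≤ #G.edgeFinset := by
  rw [← card_incidenceFinset_eq_degree, ← card_union_of_disjoint]
  · exact card_le_card (union_subset inter_subset_left (G.incidenceFinset_subset u))
  · rw [Finset.disjoint_left]
    intro e he heu
    rw [mem_inter, mem_sym2_iff] at he
    exact hu (he.2 u (G.mem_incidenceFinset u e |>.mp heu).2)

theorem card_edgeFinset_inter_sym2_add_degree_add_degree_le {S : Finset V} {u w : V}
    (hu : u ∉ S) (hw : w ∉ S) (huw : u ≠ w) :
    #(G.edgeFinset ∩ S.sym2) + G.degree u + G.degree w ≤ #G.edgeFinset + 1 := by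
  have h_inter : #(G.incidenceFinset u ∩ G.incidenceFinset w) ≤ 1 := by
    refine card_le_one.mpr fun e he f hf => ?_
    have h_edge := fun x (hx : x ∈ G.incidenceFinset u ∩ G.incidenceFinset w) =>
      G.incidenceSet_inter_incidenceSet_subset huw (by simpa using hx)
    exact (h_edge e he).trans (h_edge f hf).symm
  have h_disj : Disjoint (G.edgeFinset ∩ S.sym2) (G.incidenceFinset u ∪ G.incidenceFinset w) := by
    rw [Finset.disjoint_left]
    intro e he heuw
    rw [mem_inter, mem_sym2_iff] at he
    rcases mem_union.mp heuw with heu | hew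
    · exact hu (he.2 u (G.mem_incidenceFinset u e |>.mp heu).2)
    · exact hw (he.2 w (G.mem_incidenceFinset w e |>.mp hew).2)
  have h_sub := card_le_card <| union_subset (inter_subset_left (s₂ := S.sym2)) <|
    union_subset (G.incidenceFinset_subset u) (G.incidenceFinset_subset w)
  rw [card_union_of_disjoint h_disj] at h_sub
  have h_union := card_union_add_card_inter (G.incidenceFinset u) (G.incidenceFinset w)
  rw [card_incidenceFinset_eq_degree, card_incidenceFinset_eq_degree] at h_union
  omega

theorem card_edgeFinset_inter_sym2_compl_add_le {B : Finset V} {u : V} (hu : u ∈ B)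
    (hB : ∀ b ∈ B, 2 * #B ≤ G.degree b + 1) :
    #(G.edgeFinset ∩ Bᶜ.sym2) + G.degree u + 2 * #B ≤ #G.edgeFinset + 2 := by
  obtain h_single | h_nontriv := B.eq_singleton_or_nontrivial hu
  · have := G.card_edgeFinset_inter_sym2_add_degree_le (S := Bᶜ) (u := u) (by simpa)
    rw [h_single, card_singleton] at *
    omega
  · obtain ⟨b, hb, hbu⟩ := h_nontriv.exists_ne u
    have := G.card_edgeFinset_inter_sym2_add_degree_add_degree_le (S := Bᶜ)
      (by simpa : u ∉ Bᶜ) (by simpa : b ∉ Bᶜ) hbu.symm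
    have := hB b hb
    omega

end

end SimpleGraph

theorem ncard_edgesWithin_coe {V : Type*} [Fintype V] [DecidableEq V] (G : SimpleGraph V)
    [DecidableRel G.Adj] (X : Finset V) :
    (edgesWithin G X).ncard = #(G.edgeFinset ∩ X.sym2) := by
  rw [← Set.ncard_coe_finset]
  congr 1
  ext e
  simp only [edgesWithin, Set.mem_ofPred_eq, coe_inter, coe_edgeFinset, Set.mem_inter_iff,
    mem_coe, Finset.mem_sym2_iff]

theorem exists_large_sparse_subset_general {V : Type*} [Fintype V]
    (G : SimpleGraph V) [DecidableRel G.Adj]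
    (m s : ℕ) (hm : m = G.edgeSet.ncard) (hs : m = 3 * s + 1)
    (hlarge : 7 * 10 ^ 10 ≤ m)
    (ε : ℝ) (hε : ε = 2.7e-5)
    (B : Set V) (hB : B = {v : V | ε * m < (G.degree v : ℝ)})
    (V' : Set V) (hV' : V' = Bᶜ)
    (hΔlo : 0.51 * (m : ℝ) < (G.maxDegree : ℝ)) (hΔhi : G.maxDegree ≤ 2 * s)
    (v1 : V) (hv1 : G.degree v1 = G.maxDegree) :
    ∃ X ⊆ V', s + 1 ≤ X.ncard ∧
      ((edgesWithin G X).ncard : ℤ) ≤ 2 * (s : ℤ) - (G.maxDegree : ℤ) + 1 := by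
  classical
  subst hV' hε
  set Bf : Finset V := {v | 2.7e-5 * (m : ℝ) < G.degree v}
  have hBf : B = ↑Bf := by rw [hB]; ext; simp [Bf]
  have hmE : #G.edgeFinset = m := by rw [hm, ← coe_edgeFinset, Set.ncard_coe_finset]
  have hmR : (7 * 10 ^ 10 : ℝ) ≤ m := by exact_mod_cast hlarge
  have hv1B : v1 ∈ Bf := by simp only [Bf, mem_filter, mem_univ, true_and, hv1]; linarith
  have hB_card : #Bf ≤ 74074 := G.card_filter_lt_degree_le (by rw [hmE]; push_cast; linarith)
  have h_edges := G.card_edgeFinset_inter_sym2_compl_add_le hv1B fun b hb => by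
    have : (#Bf : ℝ) ≤ 74074 := by exact_mod_cast hB_card
    have : (2 * #Bf : ℝ) ≤ G.degree b + 1 := by simp only [Bf, mem_filter] at hb; linarith
    exact_mod_cast this
  have h_verts : G.maxDegree < #Bfᶜ + #Bf := by
    rw [card_compl, Nat.sub_add_cancel (card_le_univ Bf), ← hv1]
    exact G.degree_lt_card_verts v1
  have hΔ : 51 * m < 100 * G.maxDegree := by
    exact_mod_cast (by linarith : (51 * m : ℝ) < 100 * G.maxDegree)
  obtain ⟨X, hXS, hX_card, hX_edges⟩ :=
    G.exists_sparse_subset_of_add_three_mul_le (S := Bfᶜ) (k := s + 1)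
      (T := 2 * s + 1 - G.maxDegree) (by omega) (by omega) (by omega)
  refine ⟨X, ?_, ?_, ?_⟩
  · rw [hBf, ← coe_compl]
    exact_mod_cast hXS
  · rw [Set.ncard_coe_finset, hX_card]
  · rw [ncard_edgesWithin_coe]
    omega

/-- Claim 2 of Case 1. Under the hypotheses of Case 1, there is a set
`X ⊆ V'` with `|X| ≥ s + 1` and `|E(X)| ≤ 2s − Δ + 1`. -/
theorem exists_large_sparse_subset {V : Type*} [Fintype V] [DecidableEq V]
    (G : SimpleGraph V) [DecidableRel G.Adj]
    (m s : ℕ) (hm : m = G.edgeSet.ncard) (hs : m = 3 * s + 1)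
    (hlarge : 7 * 10 ^ 10 ≤ m)
    (ε : ℝ) (hε : ε = 2.7e-5)
    (B : Set V) (hB : B = {v : V | ε * m < (G.degree v : ℝ)})
    (V' : Set V) (hV' : V' = Bᶜ)
    (hΔlo : 0.51 * (m : ℝ) < (G.maxDegree : ℝ)) (hΔhi : G.maxDegree ≤ 2 * s)
    (v1 : V) (hv1 : G.degree v1 = G.maxDegree)
    (hdom : ∀ u : V, u ≠ v1 → G.Adj v1 u) :
    ∃ X ⊆ V', s + 1 ≤ X.ncard ∧
      ((edgesWithin G X).ncard : ℤ) ≤ 2 * (s : ℤ) - (G.maxDegree : ℤ) + 1 :=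
  exists_large_sparse_subset_general G m s hm hs hlarge ε hε B hB V' hV' hΔlo hΔhi v1 hv1
end

section
/- Let G = (V,E) be a finite simple graph and let u, v be two distinct vertices of G at distance at least 3 (in particular u and v are non-adjacent and have no common neighbour). Let G' be the graph obtained from G by identifying u and v, i.e. V(G') = V ∖ {v} and E(G') consists of all edges of G not incident to v together with an edge uw for every edge vw of G. Then |E(G')| = |E(G)| and tes(G) ≤ tes(G'). -/
/-
The map `V → V ∖ {v}` sending `v` to `u` and fixing everything else is a homomorphism `G →g G'`
mapping `E(G)` onto `E(G')`, and it is injective on edges: two edges can only merge if they are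
`uw` and `vw`, and `u`, `v` have no common neighbour. Pulling back an optimal edge irregular total
weighting of `G'` along it gives one of `G` with the same bound.
-/

open SimpleGraph

/-- The total edge irregularity strength of `G`. -/
noncomputable def tes {V : Type*} (G : SimpleGraph V) : ℕ :=
  sInf {s : ℕ | ∃ (wv : V → ℕ) (we : Sym2 V → ℕ), IsEdgeIrregularTotalWeighting G s wv we}

section Weighting

variable {V W : Type*} {G : SimpleGraph V} {G' : SimpleGraph W}

theorem exists_isEdgeIrregularTotalWeighting [Finite V] (G : SimpleGraph V) :
    ∃ s wv we, IsEdgeIrregularTotalWeighting G s wv we := by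
  obtain ⟨n, ⟨e⟩⟩ := Finite.exists_equiv_fin (Sym2 V)
  refine ⟨n + 1, fun _ => 1, fun x => e x + 1, fun _ => ?_, fun x _ => ?_, ?_⟩
  · dsimp only
    omega
  · have := (e x).isLt
    dsimp only
    omega
  · intro a b a' b' _ _ hne heq
    dsimp only at heq
    exact hne (e.injective (Fin.ext (by omega)))

theorem exists_isEdgeIrregularTotalWeighting_tes [Finite V] (G : SimpleGraph V) :
    ∃ wv we, IsEdgeIrregularTotalWeighting G (tes G) wv we :=
  Nat.sInf_mem (exists_isEdgeIrregularTotalWeighting G)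

theorem IsEdgeIrregularTotalWeighting.comap (φ : G →g G')
    (hφ : Set.InjOn (Sym2.map φ) G.edgeSet) {s : ℕ} {wv : W → ℕ} {we : Sym2 W → ℕ}
    (h : IsEdgeIrregularTotalWeighting G' s wv we) :
    IsEdgeIrregularTotalWeighting G s (wv ∘ φ) (we ∘ Sym2.map φ) := by
  obtain ⟨hwv, hwe, hirr⟩ := h
  refine ⟨fun x => hwv (φ x), fun e he => hwe _ (φ.map_mem_edgeSet he), ?_⟩
  intro a b a' b' hab hab' hne
  exact hirr _ _ _ _ (φ.map_adj hab) (φ.map_adj hab')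
    fun heq => hne (hφ (G.mem_edgeSet.mpr hab) (G.mem_edgeSet.mpr hab') heq)

theorem tes_le_tes_of_injOn [Finite W] (φ : G →g G')
    (hφ : Set.InjOn (Sym2.map φ) G.edgeSet) : tes G ≤ tes G' := by
  obtain ⟨wv, we, h⟩ := exists_isEdgeIrregularTotalWeighting_tes G'
  exact Nat.sInf_le ⟨_, _, h.comap φ hφ⟩

end Weighting

section Identify

variable {V : Type*} [DecidableEq V] {u v : V} (huv : u ≠ v)
  {G : SimpleGraph V} {G' : SimpleGraph {x : V // x ≠ v}}

def identify (x : V) : {x : V // x ≠ v} :=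
  if h : x = v then ⟨u, huv⟩ else ⟨x, h⟩

theorem identify_self : identify huv v = ⟨u, huv⟩ := dif_pos rfl

theorem identify_of_ne {x : V} (hx : x ≠ v) : identify huv x = ⟨x, hx⟩ := dif_neg hx

theorem identify_eq_identify_iff {x y : V} :
    identify huv x = identify huv y ↔ x = y ∨ s(x, y) = s(u, v) := by
  rw [Sym2.eq_iff]
  unfold identify
  split_ifs <;> grind

def identifyHom
    (hG' : ∀ a b : {x : V // x ≠ v}, G'.Adj a b ↔
      (G.Adj a b ∨ ((a : V) = u ∧ G.Adj v b) ∨ ((b : V) = u ∧ G.Adj (a : V) v))) :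
    G →g G' where
  toFun := identify huv
  map_rel' {a b} hab := by
    rw [hG']
    by_cases ha : a = v <;> by_cases hb : b = v
    · exact absurd (ha ▸ hb ▸ hab) G.irrefl
    · rw [ha] at hab
      simp [ha, hb, hab, identify_self, identify_of_ne]
    · rw [hb] at hab
      simp [ha, hb, hab, identify_self, identify_of_ne]
    · simp [ha, hb, hab, identify_of_ne]

theorem injOn_map_identify (hcn : ∀ w : V, ¬ (G.Adj u w ∧ G.Adj w v)) :
    Set.InjOn (Sym2.map (identify huv)) G.edgeSet := by
  intro e he e' he' h
  induction e using Sym2.ind with | _ a b =>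
  induction e' using Sym2.ind with | _ a' b' =>
  rw [mem_edgeSet] at he he'
  simp only [Sym2.map_mk, Sym2.eq_iff, identify_eq_identify_iff] at h ⊢
  have := G.adj_symm he
  have := G.adj_symm he'
  grind [G.irrefl]

theorem surjOn_map_identify
    (hG' : ∀ a b : {x : V // x ≠ v}, G'.Adj a b ↔
      (G.Adj a b ∨ ((a : V) = u ∧ G.Adj v b) ∨ ((b : V) = u ∧ G.Adj (a : V) v))) :
    Set.SurjOn (Sym2.map (identify huv)) G.edgeSet G'.edgeSet := by
  intro e' he'
  induction e' using Sym2.ind with | _ x y =>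
  have hu : ∀ z : {x : V // x ≠ v}, (z : V) = u → identify huv v = z :=
    fun z hz => (identify_self huv).trans (Subtype.ext hz.symm)
  rcases (hG' x y).1 he' with h | ⟨hx, h⟩ | ⟨hy, h⟩
  · exact ⟨s(x, y), h, by simp [identify_of_ne, x.2, y.2]⟩
  · exact ⟨s(v, y), h, by simp [identify_of_ne, y.2, hu x hx]⟩
  · exact ⟨s(x, v), h, by simp [identify_of_ne, x.2, hu y hy]⟩

end Identify

theorem tes_le_of_identify_general {V : Type*} [Fintype V] [DecidableEq V]
    (G : SimpleGraph V) (u v : V) (huv : u ≠ v)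
    (hcn : ∀ w : V, ¬ (G.Adj u w ∧ G.Adj w v))
    (G' : SimpleGraph {x : V // x ≠ v})
    (hG' : ∀ a b : {x : V // x ≠ v},
      G'.Adj a b ↔
        (G.Adj a b ∨ ((a : V) = u ∧ G.Adj v b) ∨ ((b : V) = u ∧ G.Adj (a : V) v))) :
    G'.edgeSet.ncard = G.edgeSet.ncard ∧ tes G ≤ tes G' := by
  let φ : G →g G' := identifyHom huv hG'
  have hbij : Set.BijOn (Sym2.map φ) G.edgeSet G'.edgeSet :=
    ⟨fun _ => φ.map_mem_edgeSet, injOn_map_identify huv hcn, surjOn_map_identify huv hG'⟩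
  exact ⟨hbij.ncard_eq.symm, tes_le_tes_of_injOn φ hbij.injOn⟩

/-- If `u` and `v` are distinct vertices at distance at least `3` in `G`
(non-adjacent with no common neighbour) and `G'` is obtained from `G` by identifying `u`
and `v` (vertex set `V ∖ {v}`; edges of `G` not incident to `v`, plus an edge `uw` for
every edge `vw` of `G`), then `|E(G')| = |E(G)|` and `tes(G) ≤ tes(G')`. -/
theorem tes_le_of_identify {V : Type*} [Fintype V] [DecidableEq V]
    (G : SimpleGraph V) (u v : V) (huv : u ≠ v)
    (hadj : ¬ G.Adj u v) (hcn : ∀ w : V, ¬ (G.Adj u w ∧ G.Adj w v))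
    (G' : SimpleGraph {x : V // x ≠ v})
    (hG' : ∀ a b : {x : V // x ≠ v},
      G'.Adj a b ↔
        (G.Adj a b ∨ ((a : V) = u ∧ G.Adj v b) ∨ ((b : V) = u ∧ G.Adj (a : V) v))) :
    G'.edgeSet.ncard = G.edgeSet.ncard ∧ tes G ≤ tes G' :=
  tes_le_of_identify_general G u v huv hcn G' hG'
end
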